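/- Let Ω ⊂ ℝ^d with |Ω| = 1 and u ∈ L²(ℝ^d). If the vector-valued Gabor system {G_{a,b}}_{a,b∈A} with G_{a,b}(α) = e^{−2πi⟨α,b⟩} u(·−a) is an orthonormal basis for L²(Ω, PW_Ω(ℝ^d)), then the translates {u(·−a)}_{a∈A} form an orthonormal system in L²(ℝ^d), and for every g ∈ PW_Ω(ℝ^d) with ⟨g, u(·−a)⟩ = 0 for all a ∈ A one has g = 0; hence {u(·−a)}_{a∈A} is an orthonormal basis of PW_Ω(ℝ^d). -/

import Mathlib

open MeasureTheory Filter Real Complex FourierTransform ComplexConjugate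
open scoped ENNReal Topology RealInnerProductSpace BigOperators Classical

noncomputable section

variable {V : Type*} [NormedAddCommGroup V] [InnerProductSpace ℝ V]
  [MeasurableSpace V] [BorelSpace V] [FiniteDimensional ℝ V]

/-- The Paley–Wiener space `PW_Ω`: `L²` functions whose Fourier transform vanishes
a.e. outside `Ω`. -/
def PW (Ω : Set V) : Set (V → ℂ) :=
  {f | MemLp f 2 (volume : Measure V) ∧ ∀ᵐ ξ : V, ξ ∉ Ω → 𝓕 f ξ = 0}

/-- The exponential `e_a(ξ) = e^{-2πi⟨ξ,a⟩}`. -/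
def eFun (a : V) : V → ℂ := fun ξ => Complex.exp (-(2 * (π : ℂ) * Complex.I * (⟪ξ, a⟫ : ℝ)))

/-- Translation operator: `T a φ = φ(· - a)`. -/
def Tr (a : V) (φ : V → ℂ) : V → ℂ := fun x => φ (x - a)

/-- The `L²(μ)` inner product of two functions. -/
def ip (μ : Measure V) (f g : V → ℂ) : ℂ := ∫ x, f x * conj (g x) ∂μ

/-- The squared `L²(μ)` norm of a function. -/
def nsq (μ : Measure V) (f : V → ℂ) : ℝ := ∫ x, ‖f x‖ ^ 2 ∂μ

/-- `f = ∑ i, c i • g i` with convergence (over finite partial sums) in the `L²(μ)` norm. -/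
def ExpandsTo {ι : Type*} (μ : Measure V) (c : ι → ℂ) (g : ι → V → ℂ) (f : V → ℂ) : Prop :=
  Tendsto (fun s : Finset ι => eLpNorm (fun x => f x - ∑ i ∈ s, c i * g i x) 2 μ)
    atTop (𝓝 0)

/-- The family `g` is a Riesz basis, with constants `C₁ ≤ C₂`, for the subspace `S` of
`L²(μ)`: every `f ∈ S` has an `ℓ²` expansion `f = ∑ c i • g i` with
`C₁ ∑ |c i|² ≤ ‖f‖² ≤ C₂ ∑ |c i|²`. -/
def IsRieszBasisFor {ι : Type*} (μ : Measure V) (g : ι → V → ℂ) (S : Set (V → ℂ))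
    (C₁ C₂ : ℝ) : Prop :=
  0 < C₁ ∧ C₁ ≤ C₂ ∧
  ∀ f ∈ S, ∃ c : ι → ℂ, Summable (fun i => ‖c i‖ ^ 2) ∧ ExpandsTo μ c g f ∧
    C₁ * ∑' i, ‖c i‖ ^ 2 ≤ nsq μ f ∧ nsq μ f ≤ C₂ * ∑' i, ‖c i‖ ^ 2

/-- The family `g` is a frame with bounds `C₁ ≤ C₂` for the subspace `S` of `L²(μ)`. -/
def IsFrameFor {ι : Type*} (μ : Measure V) (g : ι → V → ℂ) (S : Set (V → ℂ))
    (C₁ C₂ : ℝ) : Prop :=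
  0 < C₁ ∧ C₁ ≤ C₂ ∧
  ∀ f ∈ S, C₁ * nsq μ f ≤ ∑' i, ‖ip μ f (g i)‖ ^ 2 ∧
    ∑' i, ‖ip μ f (g i)‖ ^ 2 ≤ C₂ * nsq μ f

/-- The family `g` is an orthonormal basis for the subspace `S` of `L²(μ)`:
it is orthonormal and its orthogonal complement in `S` is trivial. -/
def IsONBFor {ι : Type*} (μ : Measure V) (g : ι → V → ℂ) (S : Set (V → ℂ)) : Prop :=
  (∀ i j, ip μ (g i) (g j) = if i = j then 1 else 0) ∧
  ∀ f ∈ S, (∀ i, ip μ f (g i) = 0) → f =ᵐ[μ] 0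

/-- The subspace of `L²` of the restricted measure to `Ω` (i.e. `L²(Ω)`). -/
def L2S (Ω : Set V) : Set (V → ℂ) := {u | MemLp u 2 ((volume : Measure V).restrict Ω)}

/-- Membership in the Bochner space `L²(Ω, PW_Ω)` of `PW_Ω`-valued square-integrable functions,
encoded as a function of two variables. -/
def MemL2PW (Ω : Set V) (F : V → V → ℂ) : Prop :=
  (∀ᵐ α ∂((volume : Measure V).restrict Ω), F α ∈ PW Ω) ∧
  AEStronglyMeasurable (fun p : V × V => F p.1 p.2)
    (((volume : Measure V).restrict Ω).prod (volume : Measure V)) ∧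
  Integrable (fun α => ∫ x, ‖F α x‖ ^ 2) ((volume : Measure V).restrict Ω)

/-- The inner product of the Bochner space `L²(Ω, PW_Ω)`. -/
def ipB (Ω : Set V) (F G : V → V → ℂ) : ℂ :=
  ∫ α in Ω, (∫ x, F α x * conj (G α x))

/-- The vector-valued Gabor (time-frequency) translate `G_{a,b}(α) = e_b(α)·u(·-a)`. -/
def Gb (u : V → ℂ) (a b : V) : V → V → ℂ := fun α x => eFun b α * u (x - a)


lemma e_mul_conj (b α : V) : eFun b α * conj (eFun b α) = 1 := by
  unfold eFun
  rw [← Complex.exp_conj, ← Complex.exp_add]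
  have h : conj (-(2 * (π : ℂ) * Complex.I * ((⟪α, b⟫ : ℝ) : ℂ)))
      = 2 * (π : ℂ) * Complex.I * ((⟪α, b⟫ : ℝ) : ℂ) := by
    simp [map_mul, Complex.conj_I, Complex.conj_ofReal, map_ofNat]
  rw [h]
  simp

lemma ipB_Gb (Ω : Set V) (hΩ : volume Ω = 1) (u : V → ℂ) (a a' b : V) :
    ipB Ω (Gb u a b) (Gb u a' b) = ip (volume : Measure V) (Tr a u) (Tr a' u) := by
  unfold ipB Gb
  have h : ∀ α : V, (∫ x, (eFun b α * u (x - a)) * conj (eFun b α * u (x - a')))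
      = ip (volume : Measure V) (Tr a u) (Tr a' u) := by
    intro α
    unfold ip Tr
    congr 1
    funext x
    rw [map_mul, mul_mul_mul_comm, e_mul_conj, one_mul]
  simp only [h]
  rw [setIntegral_const]
  simp [measureReal_def, hΩ]

/-- if the vector-valued Gabor system `{G_{a,b}}_{a,b∈A}` is an orthonormal basis
of `L²(Ω, PW_Ω)` then the translates `{u(·-a)}_{a∈A}` are an orthonormal system in `L²`, any
`g ∈ PW_Ω` orthogonal to all of them vanishes, and hence `{u(·-a)}_{a∈A}` is an orthonormal
basis of `PW_Ω`. -/
theorem stmt14 (Ω : Set V) (hΩmeas : MeasurableSet Ω) (hΩ : volume Ω = 1)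
    (A : Set V)
    (u : V → ℂ) (hu : MemLp u 2 (volume : Measure V))
    (hGorth : ∀ p q : A × A,
        ipB Ω (Gb u (p.1 : V) (p.2 : V)) (Gb u (q.1 : V) (q.2 : V))
          = if p = q then 1 else 0)
    (hGcompl : ∀ F : V → V → ℂ, MemL2PW Ω F →
        (∀ a b : A, ipB Ω F (Gb u (a : V) (b : V)) = 0) →
        (fun p : V × V => F p.1 p.2)
          =ᵐ[(((volume : Measure V).restrict Ω).prod (volume : Measure V))] 0) :
    (∀ a a' : A, ip (volume : Measure V) (Tr (a : V) u) (Tr (a' : V) u)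
        = if a = a' then 1 else 0) ∧
    (∀ g ∈ PW Ω, (∀ a : A, ip (volume : Measure V) g (Tr (a : V) u) = 0) →
        g =ᵐ[(volume : Measure V)] 0) ∧
    IsONBFor (volume : Measure V) (fun a : A => Tr (a : V) u) (PW Ω) := by
  have part1 : ∀ a a' : A, ip (volume : Measure V) (Tr (a : V) u) (Tr (a' : V) u)
      = if a = a' then 1 else 0 := by
    intro a a'
    have h := hGorth (a, a) (a', a)
    rw [ipB_Gb Ω hΩ] at h
    rw [h]
    by_cases hc : a = a' <;> simp [hc, Prod.ext_iff]
  have part2 : ∀ g ∈ PW Ω, (∀ a : A, ip (volume : Measure V) g (Tr (a : V) u) = 0) →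
      g =ᵐ[(volume : Measure V)] 0 := by
    intro g hg hgo
    set F : V → V → ℂ := fun _ x => g x with hF
    haveI hfin : IsFiniteMeasure ((volume : Measure V).restrict Ω) :=
      ⟨by rw [Measure.restrict_apply_univ, hΩ]; exact ENNReal.one_lt_top⟩
    have hmem : MemL2PW Ω F := by
      refine ⟨Filter.Eventually.of_forall fun α => hg, ?_, ?_⟩
      · have hmap : Measure.map Prod.snd
            (((volume : Measure V).restrict Ω).prod (volume : Measure V)) = volume := by
          rw [Measure.map_snd_prod, Measure.restrict_apply_univ, hΩ, one_smul]
        exact hg.1.aestronglyMeasurable.comp_quasiMeasurePreserving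
          ⟨measurable_snd, by rw [hmap]⟩
      · have hc : (fun α : V => ∫ x, ‖F α x‖ ^ 2) = fun _ : V => ∫ x, ‖g x‖ ^ 2 := rfl
        rw [hc]
        exact integrable_const _
    have horth : ∀ a b : A, ipB Ω F (Gb u (a : V) (b : V)) = 0 := by
      intro a b
      unfold ipB Gb
      have h1 : ∀ α : V, (∫ x, F α x * conj (eFun (b : V) α * u (x - (a : V)))) = 0 := by
        intro α
        have heq : ∀ x, F α x * conj (eFun (b : V) α * u (x - (a : V)))
            = conj (eFun (b : V) α) * (g x * conj (u (x - (a : V)))) := by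
          intro x; rw [map_mul]; ring
        simp only [heq]
        rw [integral_const_mul]
        have h2 := hgo a
        unfold ip Tr at h2
        rw [h2, mul_zero]
      simp only [h1]
      simp
    have h0 := hGcompl F hmem horth
    have h2 : ∀ᵐ α ∂((volume : Measure V).restrict Ω),
        ∀ᵐ x ∂(volume : Measure V), F α x = (0 : ℂ) := by
      have h0' : ∀ᵐ z ∂(((volume : Measure V).restrict Ω).prod (volume : Measure V)),
          F z.1 z.2 = (0 : ℂ) := by filter_upwards [h0] with p hp using hp
      exact Measure.ae_ae_of_ae_prod h0'
    have hne : ((volume : Measure V).restrict Ω) ≠ 0 := by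
      intro h
      have h3 : ((volume : Measure V).restrict Ω) Set.univ = 0 := by rw [h]; simp
      rw [Measure.restrict_apply_univ, hΩ] at h3
      exact one_ne_zero h3
    haveI := ae_neBot.2 hne
    obtain ⟨α, hα⟩ := h2.exists
    filter_upwards [hα] with x hx using hx
  refine ⟨part1, part2, ?_, part2⟩
  intro i j
  exact (part1 i j).trans (by congr)
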